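/- arXiv:2505.09637 — 2 statements merged into one kernel-verified Lean document; each statement's English description precedes it below -/
import Mathlib

section
/- Let ρ : ℝ → ℝ be a Schwartz function and define ρ₊(s) = ∫₀^∞ ρ(x)·x^{s−1} dx and ρ₋(s) = ∫₀^∞ ρ(−x)·x^{s−1} dx for Re(s) > 0. Then there is a constant C > 0 (depending only on ρ) such that for all σ with 0 < σ ≤ 1, one has ∫_{−∞}^{∞} |ρ₊(σ+it)| dt ≤ C·σ⁻¹ and ∫_{−∞}^{∞} |ρ₋(σ+it)| dt ≤ C·σ⁻¹. -/
noncomputable section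

open MeasureTheory

/-- `ρ₊(s) = ∫₀^∞ ρ(x)·x^{s−1} dx`. -/
def mellinPlus (ρ : SchwartzMap ℝ ℝ) (s : ℂ) : ℂ :=
  ∫ x in Set.Ioi (0 : ℝ), (ρ x : ℂ) * (x : ℂ) ^ (s - 1)

/-- `ρ₋(s) = ∫₀^∞ ρ(−x)·x^{s−1} dx`. -/
def mellinMinus (ρ : SchwartzMap ℝ ℝ) (s : ℂ) : ℂ :=
  ∫ x in Set.Ioi (0 : ℝ), (ρ (-x) : ℂ) * (x : ℂ) ^ (s - 1)

open Set Filter Complex Topology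

lemma schwartz_isBigO_rpow_atTop (f : SchwartzMap ℝ ℝ) (a : ℕ) :
    (fun x : ℝ => (f x : ℂ)) =O[atTop] fun x : ℝ => x ^ (-(a:ℝ)) := by
  obtain ⟨C, hC0, hC⟩ := f.decay a 0
  rw [Asymptotics.isBigO_iff]
  refine ⟨C, ?_⟩
  filter_upwards [eventually_ge_atTop (1:ℝ)] with x hx
  have hx0 : (0:ℝ) < x := lt_of_lt_of_le one_pos hx
  have h := hC x
  simp only [norm_iteratedFDeriv_zero] at h
  have hxa : ‖x‖ ^ a = x ^ (a:ℝ) := by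
    rw [Real.norm_eq_abs, abs_of_pos hx0, Real.rpow_natCast]
  rw [hxa] at h
  have hpos : (0:ℝ) < x ^ (a:ℝ) := Real.rpow_pos_of_pos hx0 _
  have h2 : ‖f x‖ ≤ C / x ^ (a:ℝ) := by
    rw [le_div_iff₀ hpos]; linarith [h]
  calc ‖(f x : ℂ)‖ = ‖f x‖ := Complex.norm_real _
    _ ≤ C / x ^ (a:ℝ) := h2
    _ = C * ‖x ^ (-(a:ℝ))‖ := by
        rw [Real.norm_eq_abs, abs_of_pos (Real.rpow_pos_of_pos hx0 _), Real.rpow_neg hx0.le,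
          div_eq_mul_inv]

lemma schwartz_isBigO_rpow_zero (f : SchwartzMap ℝ ℝ) :
    (fun x : ℝ => (f x : ℂ)) =O[𝓝[>] (0:ℝ)] fun x : ℝ => x ^ (-(0:ℝ)) := by
  obtain ⟨C, hC0, hC⟩ := f.decay 0 0
  rw [Asymptotics.isBigO_iff]
  refine ⟨C, ?_⟩
  filter_upwards [self_mem_nhdsWithin] with x (hx : (0:ℝ) < x)
  have h := hC x
  simp only [norm_iteratedFDeriv_zero, pow_zero, one_mul] at h
  simp [Real.rpow_zero, abs_of_pos hx, Complex.norm_real]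
  simpa using h

lemma mellin_integrableOn (f : SchwartzMap ℝ ℝ) {s : ℂ} (hs : 0 < s.re) (hs4 : s.re < 4) :
    IntegrableOn (fun x : ℝ => (f x : ℂ) * (x:ℂ) ^ (s - 1)) (Ioi 0) := by
  have h := mellinConvergent_of_isBigO_rpow (E := ℂ) (a := ((4:ℕ):ℝ)) (b := 0)
    ((Complex.continuous_ofReal.comp f.continuous).continuousOn.locallyIntegrableOn measurableSet_Ioi)
    (schwartz_isBigO_rpow_atTop f 4) (by exact_mod_cast hs4)
    (schwartz_isBigO_rpow_zero f) hs
  have := h  -- MellinConvergent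
  rw [MellinConvergent] at this
  exact this.congr_fun (fun x hx => by simp [smul_eq_mul, mul_comm]) measurableSet_Ioi

lemma mellin_ibp (f : SchwartzMap ℝ ℝ) {s : ℂ} (hs : 0 < s.re) (hs3 : s.re < 3) :
    ∫ x in Ioi (0:ℝ), (f x : ℂ) * (x:ℂ) ^ (s - 1)
      = -(1/s) * ∫ x in Ioi (0:ℝ), ((SchwartzMap.derivCLM ℝ ℝ f) x : ℂ) * (x:ℂ) ^ s := by
  have hs0 : s ≠ 0 := fun h => by simp [h] at hs
  have hsn : (0:ℝ) < ‖s‖ := by simpa using hs0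
  set f' := SchwartzMap.derivCLM ℝ ℝ f with hf'
  have key := integral_Ioi_mul_deriv_eq_deriv_mul (a := (0:ℝ))
    (u := fun x : ℝ => (f x : ℂ)) (v := fun x : ℝ => (x:ℂ) ^ s / s)
    (u' := fun x : ℝ => (f' x : ℂ)) (v' := fun x : ℝ => (x:ℂ) ^ (s - 1))
    (a' := 0) (b' := 0) ?_ ?_ ?_ ?_ ?_ ?_
  · rw [key]
    have : ∫ x in Ioi (0:ℝ), (f' x : ℂ) * ((x:ℂ) ^ s / s)
        = (∫ x in Ioi (0:ℝ), (f' x : ℂ) * (x:ℂ) ^ s) / s := by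
      rw [← integral_div]
      congr 1; ext x; ring
    rw [this]; ring
  · -- hu
    intro x _
    have hd : HasDerivAt f (deriv f x) x := (f.differentiable.differentiableAt).hasDerivAt
    have := hd.ofReal_comp
    simpa [hf', SchwartzMap.derivCLM_apply] using this
  · -- hv
    intro x hx
    have := hasDerivAt_ofReal_cpow_const' (ne_of_gt (mem_Ioi.mp hx)) (r := s - 1)
      (by intro h; exact hs0 (by linear_combination h))
    simpa [sub_add_cancel] using this
  · -- huv'
    exact mellin_integrableOn f hs (by linarith)
  · -- hu'v
    have h1 : IntegrableOn (fun x : ℝ => (f' x : ℂ) * (x:ℂ) ^ ((s+1) - 1)) (Ioi 0) :=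
      mellin_integrableOn f' (by simp; linarith) (by simp; linarith)
    have h2 : IntegrableOn (fun x : ℝ => (f' x : ℂ) * (x:ℂ) ^ ((s+1) - 1) / s) (Ioi 0) := h1.div_const s
    refine h2.congr_fun (fun x hx => ?_) measurableSet_Ioi
    simp only [add_sub_cancel_right, Pi.mul_apply]
    ring
  · -- h_zero
    obtain ⟨C, hC0, hC⟩ := f.decay 0 0
    apply squeeze_zero_norm' (a := fun x : ℝ => C / ‖s‖ * x ^ s.re)
    · filter_upwards [self_mem_nhdsWithin] with x (hx : (0:ℝ) < x)
      have hb := hC x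
      simp only [norm_iteratedFDeriv_zero, pow_zero, one_mul] at hb
      have hcp : ‖(x:ℂ) ^ s‖ = x ^ s.re := by
        rw [Complex.norm_cpow_eq_rpow_re_of_pos hx]
      simp only [Pi.mul_apply, norm_mul, norm_div, Complex.norm_real, hcp]
      rw [div_mul_eq_mul_div, mul_div_assoc]
      gcongr
    · have h1 : Tendsto (fun x : ℝ => x ^ s.re) (𝓝[>] 0) (𝓝 0) := by
        have := (Real.continuousAt_rpow_const 0 s.re (Or.inr hs.le)).tendsto
        rw [Real.zero_rpow (ne_of_gt hs)] at this
        exact this.mono_left nhdsWithin_le_nhds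
      simpa using h1.const_mul (C / ‖s‖)
  · -- h_infty
    obtain ⟨C, hC0, hC⟩ := f.decay 3 0
    apply squeeze_zero_norm' (a := fun x : ℝ => C / ‖s‖ * x ^ (s.re - 3))
    · filter_upwards [eventually_ge_atTop (1:ℝ)] with x hx
      have hx0 : (0:ℝ) < x := lt_of_lt_of_le one_pos hx
      have hb := hC x
      simp only [norm_iteratedFDeriv_zero] at hb
      have hxn : ‖x‖ ^ 3 = x ^ ((3:ℕ):ℝ) := by
        rw [Real.norm_eq_abs, abs_of_pos hx0, Real.rpow_natCast]
      rw [hxn] at hb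
      have hfb : ‖f x‖ ≤ C * x ^ (-(3:ℝ)) := by
        rw [Real.rpow_neg hx0.le, ← div_eq_mul_inv, le_div_iff₀ (Real.rpow_pos_of_pos hx0 _)]
        calc ‖f x‖ * x ^ ((3:ℕ):ℝ) = x ^ ((3:ℕ):ℝ) * ‖f x‖ := by ring
          _ ≤ C := hb
      have hcp : ‖(x:ℂ) ^ s‖ = x ^ s.re := by
        rw [Complex.norm_cpow_eq_rpow_re_of_pos hx0]
      simp only [Pi.mul_apply, norm_mul, norm_div, Complex.norm_real, hcp]
      have hxx : x ^ (s.re - 3) = x ^ (-(3:ℝ)) * x ^ s.re := by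
        rw [← Real.rpow_add hx0, show (-(3:ℝ) + s.re) = s.re - 3 by ring]
      have : C / ‖s‖ * x ^ (s.re - 3) = (C * x ^ (-(3:ℝ))) * (x ^ s.re / ‖s‖) := by
        rw [hxx]; ring
      rw [this]
      gcongr
    · have h1 : Tendsto (fun x : ℝ => x ^ (s.re - 3)) atTop (𝓝 0) := by
        have := tendsto_rpow_neg_atTop (y := 3 - s.re) (by linarith)
        refine this.congr (fun x => by rw [neg_sub])
      simpa using h1.const_mul (C / ‖s‖)

lemma mellin_ibp2 (f : SchwartzMap ℝ ℝ) {s : ℂ} (hs : 0 < s.re) (hs2 : s.re < 2) :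
    ∫ x in Ioi (0:ℝ), (f x : ℂ) * (x:ℂ) ^ (s - 1)
      = (1/(s*(s+1))) * ∫ x in Ioi (0:ℝ),
          ((SchwartzMap.derivCLM ℝ ℝ (SchwartzMap.derivCLM ℝ ℝ f)) x : ℂ) * (x:ℂ) ^ (s + 1) := by
  have hs0 : s ≠ 0 := fun h => by simp [h] at hs
  have hs1 : s + 1 ≠ 0 := by
    intro h
    have := congrArg Complex.re h
    simp at this
    linarith
  have h1 := mellin_ibp f hs (by linarith)
  have h2 := mellin_ibp (SchwartzMap.derivCLM ℝ ℝ f) (s := s + 1)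
    (by simp; linarith) (by simp; linarith)
  rw [show s + 1 - 1 = s by ring] at h2
  rw [h1, h2]
  field_simp

set_option maxHeartbeats 1000000 in
lemma mellin_aux (f : SchwartzMap ℝ ℝ) :
    ∃ C : ℝ, 0 < C ∧ ∀ σ : ℝ, 0 < σ → σ ≤ 1 →
      Integrable (fun t : ℝ => ‖∫ x in Ioi (0:ℝ),
        (f x : ℂ) * (x:ℂ) ^ ((σ:ℂ) + t * Complex.I - 1)‖) ∧
      (∫ t : ℝ, ‖∫ x in Ioi (0:ℝ),
        (f x : ℂ) * (x:ℂ) ^ ((σ:ℂ) + t * Complex.I - 1)‖) ≤ C * σ⁻¹ := by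
  set f'' := SchwartzMap.derivCLM ℝ ℝ (SchwartzMap.derivCLM ℝ ℝ f) with hf''
  -- the dominating integral
  have hMint : IntegrableOn (fun x : ℝ => ‖f'' x‖ * (x + x^2)) (Ioi 0) := by
    have h1 := f''.integrable_pow_mul (volume : Measure ℝ) 1
    have h2 := f''.integrable_pow_mul (volume : Measure ℝ) 2
    have h3 : IntegrableOn (fun x : ℝ => ‖x‖^1 * ‖f'' x‖ + ‖x‖^2 * ‖f'' x‖) (Ioi 0) :=
      (h1.add h2).integrableOn
    refine h3.congr_fun (fun x hx => ?_) measurableSet_Ioi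
    have hx0 : (0:ℝ) < x := hx
    show ‖x‖^1 * ‖f'' x‖ + ‖x‖^2 * ‖f'' x‖ = ‖f'' x‖ * (x + x^2)
    rw [Real.norm_eq_abs, abs_of_pos hx0]
    ring
  set M : ℝ := ∫ x in Ioi (0:ℝ), ‖f'' x‖ * (x + x^2) with hM
  have hM0 : 0 ≤ M := setIntegral_nonneg measurableSet_Ioi fun x hx => by
    have : (0:ℝ) < x := hx
    positivity
  refine ⟨2 * Real.pi * M + 1, by positivity, fun σ hσ hσ1 => ?_⟩
  -- pointwise bound
  have hpt : ∀ t : ℝ, ‖∫ x in Ioi (0:ℝ),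
      (f x : ℂ) * (x:ℂ) ^ ((σ:ℂ) + t * Complex.I - 1)‖ ≤ 2 * M / σ * (1 + t^2)⁻¹ := by
    intro t
    set s : ℂ := (σ:ℂ) + t * Complex.I with hsdef
    have hre : s.re = σ := by simp [hsdef]
    have him : s.im = t := by simp [hsdef]
    have hs : 0 < s.re := by rw [hre]; exact hσ
    have hI2 : ‖∫ x in Ioi (0:ℝ), (f'' x : ℂ) * (x:ℂ) ^ (s + 1)‖ ≤ M := by
      refine (norm_integral_le_integral_norm _).trans ?_
      refine integral_mono_of_nonneg (Eventually.of_forall fun x => norm_nonneg _) hMint ?_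
      filter_upwards [ae_restrict_mem measurableSet_Ioi] with x (hx : (0:ℝ) < x)
      rw [norm_mul, Complex.norm_real]
      have hcp : ‖(x:ℂ) ^ (s+1)‖ = x ^ (s.re + 1) := by
        rw [Complex.norm_cpow_eq_rpow_re_of_pos hx]
        norm_num
      rw [hcp, hre]
      refine mul_le_mul_of_nonneg_left ?_ (norm_nonneg _)
      · -- x ^ (σ + 1) ≤ x + x ^ 2
        rcases le_total x 1 with hx1 | hx1
        · have : x ^ (σ + 1) ≤ x ^ (1:ℝ) :=
            Real.rpow_le_rpow_of_exponent_ge hx hx1 (by linarith)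
          rw [Real.rpow_one] at this
          nlinarith [sq_nonneg x]
        · have : x ^ (σ + 1) ≤ x ^ (2:ℝ) :=
            Real.rpow_le_rpow_of_exponent_le hx1 (by linarith)
          rw [show (2:ℝ) = ((2:ℕ):ℝ) by norm_num, Real.rpow_natCast] at this
          nlinarith
    have hlow : σ * (1 + t^2) / 2 ≤ ‖s‖ * ‖s + 1‖ := by
      have ha : 0 ≤ σ * (1 + t^2) / 2 := by positivity
      have hb : 0 ≤ ‖s‖ * ‖s + 1‖ := by positivity
      have hsq : (σ * (1 + t^2) / 2)^2 ≤ (‖s‖ * ‖s + 1‖)^2 := by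
        rw [mul_pow, Complex.sq_norm, Complex.sq_norm, Complex.normSq_apply, Complex.normSq_apply]
        simp only [Complex.add_re, Complex.add_im, Complex.one_re, Complex.one_im, hre, him,
          add_zero]
        have hσ2 : σ^2 ≤ 1 := by nlinarith
        have e1 : σ^2 * (1+t^2) / 4 ≤ σ^2 + t^2 := by nlinarith [sq_nonneg t, sq_nonneg σ]
        have e2 : (1+t^2) ≤ (σ+1)^2 + t^2 := by nlinarith [sq_nonneg t]
        have e3 := mul_le_mul e1 e2 (by positivity) (by positivity)
        nlinarith [e3]
      calc σ * (1 + t^2) / 2 = Real.sqrt ((σ * (1 + t^2) / 2)^2) := (Real.sqrt_sq ha).symm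
        _ ≤ Real.sqrt ((‖s‖ * ‖s + 1‖)^2) := Real.sqrt_le_sqrt hsq
        _ = ‖s‖ * ‖s + 1‖ := Real.sqrt_sq hb
    have hs0 : s ≠ 0 := fun h => by rw [h] at hs; simp at hs
    have hs1ne : s + 1 ≠ 0 := by
      intro h
      have := congrArg Complex.re h
      simp [hre] at this
      linarith
    have hpos : (0:ℝ) < σ * (1 + t^2) / 2 := by positivity
    rw [mellin_ibp2 f hs (by rw [hre]; linarith), norm_mul]
    have habs1 : ‖1 / (s * (s+1))‖ = 1 / (‖s‖ * ‖s+1‖) := by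
      rw [norm_div, norm_one, norm_mul]
    rw [habs1]
    calc 1 / (‖s‖ * ‖s+1‖) *
          ‖∫ x in Ioi (0:ℝ), (f'' x : ℂ) * (x:ℂ) ^ (s + 1)‖
        ≤ 1 / (σ * (1 + t^2) / 2) * M :=
          mul_le_mul (one_div_le_one_div_of_le hpos hlow) hI2
            (norm_nonneg _) (by positivity)
        _ = 2 * M / σ * (1 + t^2)⁻¹ := by field_simp
  -- continuity / measurability
  have hcont : Continuous (fun t : ℝ => ∫ x in Ioi (0:ℝ),
      (f x : ℂ) * (x:ℂ) ^ ((σ:ℂ) + t * Complex.I - 1)) := by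
    have hmel : ∀ t : ℝ, (∫ x in Ioi (0:ℝ), (f x : ℂ) * (x:ℂ) ^ ((σ:ℂ) + t * Complex.I - 1))
        = mellin (fun x : ℝ => (f x : ℂ)) ((σ:ℂ) + t * Complex.I) := by
      intro t
      rw [mellin]
      refine setIntegral_congr_fun measurableSet_Ioi (fun x hx => ?_)
      simp [smul_eq_mul, mul_comm]
    simp_rw [hmel]
    have hdiff : ∀ t : ℝ, DifferentiableAt ℂ (mellin (fun x : ℝ => (f x : ℂ)))
        ((σ:ℂ) + t * Complex.I) := by
      intro t
      have hre : ((σ:ℂ) + t * Complex.I).re = σ := by simp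
      refine mellin_differentiableAt_of_isBigO_rpow (E := ℂ) (a := ((4:ℕ):ℝ)) (b := 0)
        ((Complex.continuous_ofReal.comp f.continuous).continuousOn.locallyIntegrableOn
          measurableSet_Ioi)
        (schwartz_isBigO_rpow_atTop f 4) (by rw [hre]; norm_num; linarith)
        (schwartz_isBigO_rpow_zero f) (by rw [hre]; exact hσ)
    have hg : Continuous (fun t : ℝ => (σ:ℂ) + t * Complex.I) :=
      continuous_const.add (Complex.continuous_ofReal.mul continuous_const)
    rw [continuous_iff_continuousAt]
    intro t
    exact ContinuousAt.comp (x := t) (g := mellin (fun x : ℝ => (f x : ℂ)))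
      (f := fun u : ℝ => (σ:ℂ) + u * Complex.I) ((hdiff t).continuousAt) hg.continuousAt
  have hBint : Integrable (fun t : ℝ => 2 * M / σ * (1 + t^2)⁻¹) :=
    integrable_inv_one_add_sq.const_mul _
  have hint : Integrable (fun t : ℝ => ‖∫ x in Ioi (0:ℝ),
      (f x : ℂ) * (x:ℂ) ^ ((σ:ℂ) + t * Complex.I - 1)‖) := by
    refine hBint.mono' ((continuous_norm.comp hcont).aestronglyMeasurable) ?_
    refine Eventually.of_forall fun t => ?_
    rw [Real.norm_eq_abs, _root_.abs_of_nonneg (norm_nonneg _)]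
    exact hpt t
  refine ⟨hint, ?_⟩
  calc (∫ t : ℝ, ‖∫ x in Ioi (0:ℝ),
        (f x : ℂ) * (x:ℂ) ^ ((σ:ℂ) + t * Complex.I - 1)‖)
      ≤ ∫ t : ℝ, 2 * M / σ * (1 + t^2)⁻¹ := integral_mono hint hBint hpt
    _ = 2 * M / σ * Real.pi := by rw [integral_const_mul, integral_univ_inv_one_add_sq]
    _ ≤ (2 * Real.pi * M + 1) * σ⁻¹ := by
        rw [div_mul_eq_mul_div, div_eq_mul_inv]
        have h1 : 0 < σ⁻¹ := inv_pos.mpr hσ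
        nlinarith [Real.pi_pos, mul_pos h1 (Real.pi_pos)]

noncomputable def negSchwartz (ρ : SchwartzMap ℝ ℝ) : SchwartzMap ℝ ℝ :=
  SchwartzMap.compCLMOfAntilipschitz (𝕜 := ℝ) (g := fun x : ℝ => -x)
    (by
      have h := (-(ContinuousLinearMap.id ℝ ℝ)).hasTemperateGrowth
      have : (⇑(-(ContinuousLinearMap.id ℝ ℝ)) : ℝ → ℝ) = fun x : ℝ => -x := by
        ext x; simp
      rwa [this] at h)
    ((Isometry.antilipschitz (fun x y => by
      simp [edist_neg_neg])) ) ρ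

lemma negSchwartz_apply (ρ : SchwartzMap ℝ ℝ) (x : ℝ) : negSchwartz ρ x = ρ (-x) := by
  rw [negSchwartz, SchwartzMap.compCLMOfAntilipschitz_apply]
  rfl

theorem mellin_vertical_line_integral_bound (ρ : SchwartzMap ℝ ℝ) :
    ∃ C : ℝ, 0 < C ∧ ∀ σ : ℝ, 0 < σ → σ ≤ 1 →
      Integrable (fun t : ℝ => ‖mellinPlus ρ (σ + t * Complex.I)‖) ∧
      Integrable (fun t : ℝ => ‖mellinMinus ρ (σ + t * Complex.I)‖) ∧
      (∫ t : ℝ, ‖mellinPlus ρ (σ + t * Complex.I)‖) ≤ C * σ⁻¹ ∧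
      (∫ t : ℝ, ‖mellinMinus ρ (σ + t * Complex.I)‖) ≤ C * σ⁻¹ := by
  obtain ⟨C₁, hC₁, h₁⟩ := mellin_aux ρ
  obtain ⟨C₂, hC₂, h₂⟩ := mellin_aux (negSchwartz ρ)
  have hplus : ∀ s : ℂ, mellinPlus ρ s = ∫ x in Ioi (0:ℝ), (ρ x : ℂ) * (x:ℂ) ^ (s - 1) :=
    fun s => rfl
  have hminus : ∀ s : ℂ, mellinMinus ρ s
      = ∫ x in Ioi (0:ℝ), ((negSchwartz ρ) x : ℂ) * (x:ℂ) ^ (s - 1) := by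
    intro s
    rw [mellinMinus]
    exact setIntegral_congr_fun measurableSet_Ioi fun x _ => by rw [negSchwartz_apply]
  refine ⟨max C₁ C₂, lt_max_of_lt_left hC₁, fun σ hσ hσ1 => ?_⟩
  obtain ⟨hi₁, hb₁⟩ := h₁ σ hσ hσ1
  obtain ⟨hi₂, hb₂⟩ := h₂ σ hσ hσ1
  have hinv : (0:ℝ) ≤ σ⁻¹ := inv_nonneg.mpr hσ.le
  simp only [hplus, hminus]
  exact ⟨hi₁, hi₂,
    hb₁.trans (mul_le_mul_of_nonneg_right (le_max_left _ _) hinv),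
    hb₂.trans (mul_le_mul_of_nonneg_right (le_max_right _ _) hinv)⟩

end
end

section
/- Fix reals P ≥ 3 and Q ≥ 1, and define F_r : (0,∞) → ℝ recursively by F_0(ε) = Q·ε⁻¹ and F_r(ε) = exp_2(P·ε⁻²)·F_{r−1}(ε²·P⁻¹) for r ≥ 1. Then there exist constants C₂ > C₁ > 0 (depending only on P and Q) such that for all ε with 0 < ε ≤ 1/2, one has exp_4(C₁·ε⁻¹) ≤ F_{⌊ε⁻¹⌋}(ε) ≤ exp_4(C₂·ε⁻¹). -/
noncomputable section

/-- `exp_2`, the 2-fold iterated exponential. -/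
def exp2 (x : ℝ) : ℝ := Real.exp (Real.exp x)

/-- `exp_4`, the 4-fold iterated exponential. -/
def exp4 (x : ℝ) : ℝ := Real.exp (Real.exp (Real.exp (Real.exp x)))

/-- The recursively defined functions `F_r`: `F_0(ε) = Q·ε⁻¹` and
`F_r(ε) = exp_2(P·ε⁻²)·F_{r−1}(ε²·P⁻¹)` for `r ≥ 1`. -/
def Fiter (P Q : ℝ) : ℕ → ℝ → ℝ
  | 0, ε => Q * ε⁻¹
  | r + 1, ε => exp2 (P * (ε⁻¹) ^ 2) * Fiter P Q r (ε ^ 2 * P⁻¹)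

open Real Finset

/-! Unrolling the recursion gives `F_r(ε) = Q · exp (∑_{k=1}^r e^{1/ε_k}) / ε_r` with
`1/ε_k = (P/ε)^(2^k) / P` increasing in `k`, so `exp_2(1/ε_r) ≤ F_r(ε) ≤ exp_2(1/ε_r + r + Q)`.
For `r = ⌊1/ε⌋` the exponent `log(1/ε_r) = 2^r log(P/ε) - log P` lies between `2^r ≥ e^{1/(4ε)}`
and `2^r P/ε ≤ e^{(P+1)/ε}`. -/

lemma add_le_exp_mul {a b : ℝ} (ha : 0 ≤ a) (hb : 1 ≤ b) : a + b ≤ exp a * b := by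
  nlinarith [add_one_le_exp a]

lemma exp_div_four_le_two_pow_floor {u : ℝ} (hu : 1 ≤ u) : exp (u / 4) ≤ 2 ^ ⌊u⌋₊ := by
  have hr : u / 2 ≤ ⌊u⌋₊ := by
    have h1 : (1 : ℝ) ≤ ⌊u⌋₊ := by exact_mod_cast (Nat.one_le_floor_iff u).2 hu
    linarith [Nat.lt_floor_add_one u]
  calc exp (u / 4) ≤ exp (⌊u⌋₊ * log 2) := by
        rw [exp_le_exp]
        nlinarith [log_two_gt_d9]
  _ = 2 ^ ⌊u⌋₊ := by rw [exp_nat_mul, exp_log two_pos]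

/-- `epsInv P ε k = ε_k⁻¹`, where `ε_0 = ε` and `ε_{k+1} = ε_k² / P`,
so that `ε_k = P (ε / P) ^ 2 ^ k`. -/
def epsInv (P ε : ℝ) (k : ℕ) : ℝ := (P / ε) ^ 2 ^ k / P

section

variable {P ε : ℝ}

lemma epsInv_zero (hP : P ≠ 0) : epsInv P ε 0 = ε⁻¹ := by
  rw [epsInv, pow_zero, pow_one]
  field_simp

lemma epsInv_one (hP : P ≠ 0) : epsInv P ε 1 = P * ε⁻¹ ^ 2 := by
  rw [epsInv, pow_one]
  field_simp

lemma epsInv_succ (P ε : ℝ) (k : ℕ) : epsInv P ε (k + 1) = epsInv P (ε ^ 2 * P⁻¹) k := by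
  rw [epsInv, epsInv, pow_succ', pow_mul]
  congr 2
  simp only [div_eq_mul_inv, mul_inv, inv_inv]
  ring

theorem Fiter_eq (Q : ℝ) (hP : P ≠ 0) (r : ℕ) :
    Fiter P Q r ε = Q * exp (∑ k ∈ range r, exp (epsInv P ε (k + 1))) * epsInv P ε r := by
  induction r generalizing ε with
  | zero => simp [Fiter, epsInv_zero hP]
  | succ r ih =>
    rw [Fiter, ih, exp2, ← epsInv_one hP, sum_range_succ', exp_add]
    simp only [← epsInv_succ, zero_add]
    ring

lemma epsInv_mono (hP : 0 < P) (hε : 0 < ε) (hεP : ε ≤ P) : Monotone (epsInv P ε) := by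
  intro i j hij
  unfold epsInv
  gcongr
  · rwa [le_div_iff₀ hε, one_mul]
  · norm_num

lemma one_le_epsInv (hP : 1 ≤ P) (hε : 0 < ε) (hε1 : ε ≤ 1) (k : ℕ) : 1 ≤ epsInv P ε k :=
  calc 1 ≤ ε⁻¹ := (one_le_inv₀ hε).2 hε1
  _ = epsInv P ε 0 := (epsInv_zero (by positivity)).symm
  _ ≤ epsInv P ε k := epsInv_mono (by positivity) hε (by linarith) k.zero_le

lemma log_epsInv (hP : 0 < P) (hε : 0 < ε) (k : ℕ) :
    log (epsInv P ε k) = 2 ^ k * log (P / ε) - log P := by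
  rw [epsInv, log_div (by positivity) hP.ne', log_pow]
  push_cast
  ring

lemma two_pow_le_log_epsInv (hP : 3 ≤ P) (hε : 0 < ε) (hε2 : ε ≤ 1 / 2) {r : ℕ} (hr : r ≠ 0) :
    (2 : ℝ) ^ r ≤ log (epsInv P ε r) := by
  have hP0 : 0 < P := by linarith
  have hlogP : 1 ≤ log P := by
    rw [le_log_iff_exp_le hP0]
    linarith [exp_one_lt_d9]
  have hlogε : 1 / 2 ≤ log ε⁻¹ := by
    have : log 2 ≤ log ε⁻¹ := log_le_log two_pos (by rw [le_inv_comm₀ two_pos hε]; linarith)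
    linarith [log_two_gt_d9]
  have hpow : (2 : ℝ) ≤ 2 ^ r := le_self_pow₀ one_le_two hr
  rw [log_epsInv hP0 hε, div_eq_mul_inv, log_mul hP0.ne' (by positivity)]
  nlinarith

lemma epsInv_le_exp (hP : 1 ≤ P) (hε : 0 < ε) (r : ℕ) :
    epsInv P ε r ≤ exp (2 ^ r * (P * ε⁻¹)) := by
  have hP0 : 0 < P := by linarith
  have hη : 0 < epsInv P ε r := by unfold epsInv; positivity
  rw [← exp_log hη, exp_le_exp, log_epsInv hP0 hε, ← div_eq_mul_inv]
  have := log_le_self (show 0 ≤ P / ε by positivity)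
  have := log_nonneg hP
  nlinarith [pow_pos (two_pos : (0 : ℝ) < 2) r]

end

section

variable {P Q ε : ℝ}

lemma exp_exp_epsInv_le_Fiter (hP : 1 ≤ P) (hQ : 1 ≤ Q) (hε : 0 < ε) (hε1 : ε ≤ 1) {r : ℕ}
    (hr : r ≠ 0) : exp (exp (epsInv P ε r)) ≤ Fiter P Q r ε := by
  obtain ⟨s, rfl⟩ := Nat.exists_eq_add_one_of_ne_zero hr
  set S := ∑ k ∈ range s, exp (epsInv P ε (k + 1))
  set η := epsInv P ε (s + 1)
  have hS : 1 ≤ exp S := one_le_exp (sum_nonneg fun _ _ => (exp_pos _).le)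
  have hQη : 1 ≤ Q * η := one_le_mul_of_one_le_of_one_le hQ (one_le_epsInv hP hε hε1 _)
  calc exp (exp η) = 1 * 1 * exp (exp η) := by ring
  _ ≤ exp S * (Q * η) * exp (exp η) := by gcongr
  _ = Fiter P Q (s + 1) ε := by rw [Fiter_eq Q (by positivity), sum_range_succ, exp_add]; ring

lemma Fiter_le_exp_exp (hP : 1 ≤ P) (hQ : 0 ≤ Q) (hε : 0 < ε) (hε1 : ε ≤ 1) (r : ℕ) :
    Fiter P Q r ε ≤ exp (exp (epsInv P ε r + r + Q)) := by
  set η := epsInv P ε r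
  set S := ∑ k ∈ range r, exp (epsInv P ε (k + 1))
  have hS : S ≤ r * exp η := by
    simpa using sum_le_card_nsmul (range r) _ (exp η) fun k hk =>
      exp_le_exp.2 (epsInv_mono (by positivity) hε (by linarith) (mem_range.1 hk))
  have hη : 0 ≤ η := zero_le_one.trans (one_le_epsInv hP hε hε1 r)
  calc Fiter P Q r ε = Q * exp S * η := Fiter_eq Q (by positivity) r
  _ ≤ exp Q * exp S * exp η := by
        gcongr
        · linarith [add_one_le_exp Q]
        · linarith [add_one_le_exp η]
  _ = exp (Q + S + η) := by rw [exp_add, exp_add]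
  _ ≤ exp (exp (η + r + Q)) := by
        rw [exp_le_exp, show η + r + Q = η + (r + Q) by ring, exp_add]
        have h1 := add_one_le_exp η
        have h2 := mul_le_mul_of_nonneg_left (add_one_le_exp (r + Q)) (exp_pos η).le
        have h3 := mul_le_mul_of_nonneg_left (one_le_exp hη) hQ
        nlinarith

lemma epsInv_add_le_exp_exp (hP : 1 ≤ P) (hQ : 0 ≤ Q) (hε : 0 < ε) (hε1 : ε ≤ 1) {r : ℕ}
    (hr : (r : ℝ) ≤ ε⁻¹) : epsInv P ε r + r + Q ≤ exp (exp ((P + Q + 2) * ε⁻¹)) := by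
  set u := ε⁻¹
  have hu : 1 ≤ u := (one_le_inv₀ hε).2 hε1
  have hpow : (2 : ℝ) ^ r ≤ exp u :=
    calc (2 : ℝ) ^ r ≤ exp 1 ^ r := by gcongr; linarith [add_one_le_exp 1]
    _ = exp r := by rw [← exp_nat_mul, mul_one]
    _ ≤ exp u := exp_le_exp.2 hr
  have hexp : r + Q + 2 ^ r * (P * u) ≤ exp ((P + Q + 2) * u) := by
    rw [show (P + Q + 2) * u = u + (P + Q + 1) * u by ring, exp_add]
    have h1 := mul_le_mul_of_nonneg_left (add_one_le_exp ((P + Q + 1) * u)) (exp_pos u).le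
    have h2 : r + Q ≤ exp u * ((Q + 1) * u) :=
      calc r + Q ≤ (Q + 1) * u := by nlinarith
      _ ≤ exp u * ((Q + 1) * u) :=
          le_mul_of_one_le_left (by positivity) (one_le_exp (by positivity))
    nlinarith [mul_le_mul_of_nonneg_right hpow (show 0 ≤ P * u by positivity), exp_pos u]
  calc epsInv P ε r + r + Q = (r + Q) + epsInv P ε r := by ring
  _ ≤ exp (r + Q) * epsInv P ε r := add_le_exp_mul (by positivity) (one_le_epsInv hP hε hε1 r)
  _ ≤ exp (r + Q) * exp (2 ^ r * (P * u)) := by gcongr; exact epsInv_le_exp hP hε r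
  _ = exp (r + Q + 2 ^ r * (P * u)) := (exp_add _ _).symm
  _ ≤ exp (exp ((P + Q + 2) * u)) := exp_le_exp.2 hexp

end

theorem Fiter_growth (P Q : ℝ) (hP : 3 ≤ P) (hQ : 1 ≤ Q) :
    ∃ C₁ C₂ : ℝ, 0 < C₁ ∧ C₁ < C₂ ∧
      ∀ ε : ℝ, 0 < ε → ε ≤ 1 / 2 →
        exp4 (C₁ * ε⁻¹) ≤ Fiter P Q ⌊ε⁻¹⌋₊ ε ∧
        Fiter P Q ⌊ε⁻¹⌋₊ ε ≤ exp4 (C₂ * ε⁻¹) := by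
  refine ⟨1 / 4, P + Q + 2, by norm_num, by linarith, fun ε hε hε2 => ?_⟩
  have hε1 : ε ≤ 1 := by linarith
  have hu : 2 ≤ ε⁻¹ := by rw [le_inv_comm₀ two_pos hε]; linarith
  have hr : ⌊ε⁻¹⌋₊ ≠ 0 := (Nat.floor_pos.2 (by linarith)).ne'
  have hη : exp (exp (1 / 4 * ε⁻¹)) ≤ epsInv P ε ⌊ε⁻¹⌋₊ := by
    rw [← exp_log (zero_lt_one.trans_le (one_le_epsInv (by linarith) hε hε1 _)), exp_le_exp,
      one_div_mul_eq_div]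
    exact (exp_div_four_le_two_pow_floor (by linarith)).trans (two_pow_le_log_epsInv hP hε hε2 hr)
  constructor
  · calc exp4 (1 / 4 * ε⁻¹) ≤ exp (exp (epsInv P ε ⌊ε⁻¹⌋₊)) := by unfold exp4; gcongr
    _ ≤ Fiter P Q ⌊ε⁻¹⌋₊ ε := exp_exp_epsInv_le_Fiter (by linarith) hQ hε hε1 hr
  · calc Fiter P Q ⌊ε⁻¹⌋₊ ε ≤ exp (exp (epsInv P ε ⌊ε⁻¹⌋₊ + ⌊ε⁻¹⌋₊ + Q)) :=
          Fiter_le_exp_exp (by linarith) (by linarith) hε hε1 _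
    _ ≤ exp4 ((P + Q + 2) * ε⁻¹) := by
          unfold exp4
          gcongr
          exact epsInv_add_le_exp_exp (by linarith) (by linarith) hε hε1
            (Nat.floor_le (by positivity))

end
end
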